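/- Let (a_n) be a sequence of pmp actions of a countable group G on probability spaces, let u be a nonprincipal ultrafilter on ℕ, and let a_u be the ultraproduct action on the Loeb measure space (X_u, μ_u). Then a_u is the WC-limit of (a_n) along u: for every finite subset F ⊆ G, (i) for every finite μ_u-measurable partition α of X_u, lim_u d_{F,α}(a_u, a_n) = 0, and (ii) for every k ∈ ℕ, lim_u d_{F,k}(a_n, a_u) = 0. -/

import Mathlib

open MeasureTheory Filter Topology
open scoped ENNReal symmDiff



/-! Ultraproducts of sets and the Loeb outer measure. -/

/-- The equivalence relation on `∀ n, X n` identifying sequences that agree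
`u`-almost everywhere. -/
def uRel (u : Ultrafilter ℕ) {X : ℕ → Type*} (x y : ∀ n, X n) : Prop :=
  ∀ᶠ n in (u : Filter ℕ), x n = y n

/-- The (set-theoretic) ultraproduct of the family `X n` with respect to the
ultrafilter `u`: the quotient of `∀ n, X n` by the relation identifying sequences
which agree `u`-almost everywhere. -/
def UProd (u : Ultrafilter ℕ) (X : ℕ → Type*) : Type _ :=
  Quot (uRel u (X := X))

/-- The class `[x_n]_u` of a sequence in the ultraproduct. -/
def uMk (u : Ultrafilter ℕ) {X : ℕ → Type*} (x : ∀ n, X n) : UProd u X :=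
  Quot.mk _ x

/-- The subset `[A_n]_u` of the ultraproduct determined by a sequence of subsets
`A n ⊆ X n`: the set of classes of sequences which belong to `A n` for `u`-almost
every `n`. -/
def uSet (u : Ultrafilter ℕ) {X : ℕ → Type*} (A : ∀ n, Set (X n)) : Set (UProd u X) :=
  {z | ∃ x : ∀ n, X n, uMk u x = z ∧ ∀ᶠ n in (u : Filter ℕ), x n ∈ A n}

/-- The limit of a sequence of extended nonnegative reals along the ultrafilter `u`
(it always exists since `ℝ≥0∞` is a compact Hausdorff space). -/
noncomputable def ulim (u : Ultrafilter ℕ) (f : ℕ → ℝ≥0∞) : ℝ≥0∞ :=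
  (u.map f).lim

/-- The Loeb outer measure `θ` on the ultraproduct: the infimum, over countable
covers of `A` by sets of the form `[B^i_n]_u` with all `B^i_n` measurable, of
`∑ᵢ lim_u μ_n (B^i_n)`. -/
noncomputable def loebOuter (u : Ultrafilter ℕ) {X : ℕ → Type*}
    [∀ n, MeasurableSpace (X n)] (μ : ∀ n, Measure (X n)) (A : Set (UProd u X)) : ℝ≥0∞ :=
  ⨅ (B : ℕ → ∀ n, Set (X n)) (_ : (∀ i n, MeasurableSet (B i n)) ∧
      A ⊆ ⋃ i, uSet u (B i)), ∑' i, ulim u fun n => μ n (B i n)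

/-- Carathéodory measurability with respect to the Loeb outer measure. -/
def LoebMeasurable (u : Ultrafilter ℕ) {X : ℕ → Type*}
    [∀ n, MeasurableSpace (X n)] (μ : ∀ n, Measure (X n)) (A : Set (UProd u X)) : Prop :=
  ∀ S : Set (UProd u X), loebOuter u μ (S ∩ A) + loebOuter u μ (S \ A) ≤ loebOuter u μ S

/-- The map on the ultraproduct induced by a sequence of maps `g n : X n → X n`. -/
def uMap (u : Ultrafilter ℕ) {X : ℕ → Type*} (g : ∀ n, X n → X n) :
    UProd u X → UProd u X :=
  Quot.lift (fun x => uMk u fun n => g n (x n))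
    (fun x y h => Quot.sound (h.mono fun n hn => by simpa using congrArg (g n) hn))


/-! Probability-measure-preserving actions, partitions, and weak containment. -/

/-- `a` is a probability-measure-preserving (pmp) action of the group `G` on the
measure space `(X, μ)`. -/
def IsPMP {G : Type*} [Group G] {X : Type*} [MeasurableSpace X]
    (μ : Measure X) (a : G → X → X) : Prop :=
  (∀ g : G, MeasurePreserving (a g) μ μ) ∧ (∀ x, a 1 x = x) ∧
    ∀ (g h : G) (x : X), a (g * h) x = a g (a h x)

/-- The translate `g · A` of a subset `A` under the action `a`. -/
def actSet {G X : Type*} (a : G → X → X) (g : G) (A : Set X) : Set X :=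
  a g '' A

/-- An (exact) finite measurable partition of `X` with `k` atoms. -/
def IsPartition {X : Type*} [MeasurableSpace X] {k : ℕ} (P : Fin k → Set X) : Prop :=
  (∀ i, MeasurableSet (P i)) ∧ Pairwise (Function.onFun Disjoint P) ∧ ⋃ i, P i = Set.univ

/-- `‖c(a,F,P) - c(b,F,Q)‖₁ = ∑_{i,j ≤ k} ∑_{f ∈ F} |μ(Pᵢ ∩ f·Pⱼ) - ν(Qᵢ ∩ f·Qⱼ)|`,
the `ℓ¹`-distance between the `F`-statistics of the two partitions. -/
noncomputable def statDist {G : Type*} {X Y : Type*} [MeasurableSpace X] [MeasurableSpace Y]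
    (μ : Measure X) (a : G → X → X) (ν : Measure Y) (b : G → Y → Y)
    (F : Finset G) {k : ℕ} (P : Fin k → Set X) (Q : Fin k → Set Y) : ℝ :=
  ∑ i : Fin k, ∑ j : Fin k, ∑ f ∈ F,
    |(μ (P i ∩ actSet a f (P j))).toReal - (ν (Q i ∩ actSet b f (Q j))).toReal|

/-- `d_{F,P}(a,b)`: the infimum over `k`-atom partitions `Q` of `X_b` of
`‖c(a,F,P) - c(b,F,Q)‖₁`. -/
noncomputable def dPart {G : Type*} {X Y : Type*} [MeasurableSpace X] [MeasurableSpace Y]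
    (μ : Measure X) (a : G → X → X) (ν : Measure Y) (b : G → Y → Y)
    (F : Finset G) {k : ℕ} (P : Fin k → Set X) : ℝ :=
  sInf {r : ℝ | ∃ Q : Fin k → Set Y, IsPartition Q ∧ r = statDist μ a ν b F P Q}

/-- `d_{F,k}(a,b)`: the supremum over `k`-atom partitions `P` of `X_a` of `d_{F,P}(a,b)`. -/
noncomputable def dNum {G : Type*} {X Y : Type*} [MeasurableSpace X] [MeasurableSpace Y]
    (μ : Measure X) (a : G → X → X) (ν : Measure Y) (b : G → Y → Y)
    (F : Finset G) (k : ℕ) : ℝ :=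
  sSup {r : ℝ | ∃ P : Fin k → Set X, IsPartition P ∧ r = dPart μ a ν b F P}

/-- Weak containment `a ≺ b` of pmp actions: every finite partition of `X_a` and
every finite set of group elements can be `ε`-simulated by a partition of `X_b`. -/
def WC {G : Type*} {X Y : Type*} [MeasurableSpace X] [MeasurableSpace Y]
    (μ : Measure X) (a : G → X → X) (ν : Measure Y) (b : G → Y → Y) : Prop :=
  ∀ ε : ℝ, 0 < ε → ∀ (F : Finset G) (k : ℕ) (P : Fin k → Set X), IsPartition P →
    ∃ Q : Fin k → Set Y, IsPartition Q ∧ statDist μ a ν b F P Q ≤ ε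

/-- The measure `μ` is diffuse (atomless in the sense of measure algebras):
every non-null measurable set contains a measurable subset of strictly
intermediate measure. -/
def Diffuse {X : Type*} [MeasurableSpace X] (μ : Measure X) : Prop :=
  ∀ A : Set X, MeasurableSet A → μ A ≠ 0 →
    ∃ B : Set X, MeasurableSet B ∧ B ⊆ A ∧ 0 < μ B ∧ μ B < μ A

/-- Diffuseness relative to a sub-σ-algebra `m`. -/
def DiffuseOn {X : Type*} (m : MeasurableSpace X) {m0 : MeasurableSpace X}
    (μ : Measure X) : Prop :=
  ∀ A : Set X, MeasurableSet[m] A → μ A ≠ 0 →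
    ∃ B : Set X, MeasurableSet[m] B ∧ B ⊆ A ∧ 0 < μ B ∧ μ B < μ A
/-! Ultraproduct actions and weak containment between ordinary actions and actions
on the Loeb space, phrased via the Loeb outer measure. -/

/-- The ultraproduct action on the Loeb space of a sequence of actions `b n` of `G`:
`g · [x_n]_u = [b n g (x_n)]_u`. -/
def uAct (u : Ultrafilter ℕ) {G : Type*} {X : ℕ → Type*}
    (b : ∀ n, G → X n → X n) (g : G) : UProd u X → UProd u X :=
  uMap u fun n => b n g

/-- An (exact) finite partition of the Loeb space into Loeb measurable atoms. -/
def LoebPartition (u : Ultrafilter ℕ) {X : ℕ → Type*} [∀ n, MeasurableSpace (X n)]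
    (μ : ∀ n, Measure (X n)) {k : ℕ} (Q : Fin k → Set (UProd u X)) : Prop :=
  (∀ i, LoebMeasurable u μ (Q i)) ∧ Pairwise (Function.onFun Disjoint Q) ∧
    ⋃ i, Q i = Set.univ

/-- The `ℓ¹`-distance between the `F`-statistics of a partition `P` for an ordinary
pmp action `c` on `(Y, ν)` and of a partition `Q` of the Loeb space for the family of
maps `T : G → UProd u X → UProd u X` (e.g. an ultraproduct action). -/
noncomputable def statDistL (u : Ultrafilter ℕ) {G : Type*}
    {Y : Type*} [MeasurableSpace Y] (ν : Measure Y) (c : G → Y → Y)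
    {X : ℕ → Type*} [∀ n, MeasurableSpace (X n)] (μ : ∀ n, Measure (X n))
    (T : G → UProd u X → UProd u X)
    (F : Finset G) {k : ℕ} (P : Fin k → Set Y) (Q : Fin k → Set (UProd u X)) : ℝ :=
  ∑ i : Fin k, ∑ j : Fin k, ∑ f ∈ F,
    |(ν (P i ∩ actSet c f (P j))).toReal -
      (loebOuter u μ (Q i ∩ (T f '' Q j))).toReal|

/-- Weak containment of an ordinary pmp action `c` on `(Y, ν)` in an action `T` on the
Loeb space of `(X n, μ n)`. -/
def WCtoLoeb (u : Ultrafilter ℕ) {G : Type*}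
    {Y : Type*} [MeasurableSpace Y] (ν : Measure Y) (c : G → Y → Y)
    {X : ℕ → Type*} [∀ n, MeasurableSpace (X n)] (μ : ∀ n, Measure (X n))
    (T : G → UProd u X → UProd u X) : Prop :=
  ∀ ε : ℝ, 0 < ε → ∀ (F : Finset G) (k : ℕ) (P : Fin k → Set Y), IsPartition P →
    ∃ Q : Fin k → Set (UProd u X), LoebPartition u μ Q ∧
      statDistL u ν c μ T F P Q ≤ ε

/-- Weak containment of an action `T` on the Loeb space of `(X n, μ n)` in an ordinary
pmp action `c` on `(Y, ν)`. -/
def WCfromLoeb (u : Ultrafilter ℕ) {G : Type*}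
    {X : ℕ → Type*} [∀ n, MeasurableSpace (X n)] (μ : ∀ n, Measure (X n))
    (T : G → UProd u X → UProd u X)
    {Y : Type*} [MeasurableSpace Y] (ν : Measure Y) (c : G → Y → Y) : Prop :=
  ∀ ε : ℝ, 0 < ε → ∀ (F : Finset G) (k : ℕ) (Q : Fin k → Set (UProd u X)),
    LoebPartition u μ Q →
      ∃ P : Fin k → Set Y, IsPartition P ∧ statDistL u ν c μ T F P Q ≤ ε

/-- The action `c` of `G` on `(Y, ν)` is a factor of the action `T` of `G` on the Loeb
space of `(X n, μ n)`: there is a `G`-equivariant measure-preserving embedding `Φ` of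
measure algebras (all identities holding modulo null sets). -/
def IsFactorOfLoeb (u : Ultrafilter ℕ) {G : Type*}
    {Y : Type*} [MeasurableSpace Y] (ν : Measure Y) (c : G → Y → Y)
    {X : ℕ → Type*} [∀ n, MeasurableSpace (X n)] (μ : ∀ n, Measure (X n))
    (T : G → UProd u X → UProd u X) : Prop :=
  ∃ Φ : Set Y → Set (UProd u X),
    (∀ A : Set Y, MeasurableSet A → LoebMeasurable u μ (Φ A)) ∧
    (∀ A : Set Y, MeasurableSet A → loebOuter u μ (Φ A) = ν A) ∧
    (∀ A : Set Y, MeasurableSet A → loebOuter u μ (Φ Aᶜ ∆ (Φ A)ᶜ) = 0) ∧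
    (∀ A : ℕ → Set Y, (∀ i, MeasurableSet (A i)) →
      loebOuter u μ (Φ (⋃ i, A i) ∆ ⋃ i, Φ (A i)) = 0) ∧
    (∀ (g : G) (A : Set Y), MeasurableSet A →
      loebOuter u μ (Φ (actSet c g A) ∆ (T g '' Φ A)) = 0)
/-- `d_{F,Q}(a_u, c)` for a partition `Q` of the Loeb space: the infimum over `k`-atom
partitions `P` of `(Y, ν)` of the `ℓ¹`-distance of `F`-statistics. -/
noncomputable def dPartFromLoeb (u : Ultrafilter ℕ) {G : Type*}
    {X : ℕ → Type*} [∀ n, MeasurableSpace (X n)] (μ : ∀ n, Measure (X n))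
    (T : G → UProd u X → UProd u X) (F : Finset G) {k : ℕ}
    (Q : Fin k → Set (UProd u X))
    {Y : Type*} [MeasurableSpace Y] (ν : Measure Y) (c : G → Y → Y) : ℝ :=
  sInf {r : ℝ | ∃ P : Fin k → Set Y, IsPartition P ∧ r = statDistL u ν c μ T F P Q}

/-- `d_{F,P}(c, a_u)` for a partition `P` of `(Y, ν)`: the infimum over `k`-atom Loeb
partitions `Q` of the `ℓ¹`-distance of `F`-statistics. -/
noncomputable def dPartToLoeb (u : Ultrafilter ℕ) {G : Type*}
    {Y : Type*} [MeasurableSpace Y] (ν : Measure Y) (c : G → Y → Y)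
    {X : ℕ → Type*} [∀ n, MeasurableSpace (X n)] (μ : ∀ n, Measure (X n))
    (T : G → UProd u X → UProd u X) (F : Finset G) {k : ℕ} (P : Fin k → Set Y) : ℝ :=
  sInf {r : ℝ | ∃ Q : Fin k → Set (UProd u X), LoebPartition u μ Q ∧
    r = statDistL u ν c μ T F P Q}

/-- `d_{F,k}(c, a_u)`: the supremum over `k`-atom partitions `P` of `(Y, ν)` of
`d_{F,P}(c, a_u)`. -/
noncomputable def dNumToLoeb (u : Ultrafilter ℕ) {G : Type*}
    {Y : Type*} [MeasurableSpace Y] (ν : Measure Y) (c : G → Y → Y)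
    {X : ℕ → Type*} [∀ n, MeasurableSpace (X n)] (μ : ∀ n, Measure (X n))
    (T : G → UProd u X → UProd u X) (F : Finset G) (k : ℕ) : ℝ :=
  sSup {r : ℝ | ∃ P : Fin k → Set Y, IsPartition P ∧ r = dPartToLoeb u ν c μ T F P}

/-!
Internal sets `[A_n]_u` form a Boolean algebra of Loeb measurable sets on which `θ` is the
ultralimit of the `μ n`; the point is countable saturation, which turns a countable cover of an
internal set by internal sets into a finite one. Every Loeb measurable set is `θ`-close to an
internal set, so a Loeb partition is close to an internal partition `[P_n]_u`, and the statistics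
of `[P_n]_u` are the `u`-limits of those of the partitions `P_n`. This gives (i). For (ii), apply
the same limit to any choice of partitions `P_n`, one for each `n`: since the `P_n` can be chosen
as bad as possible for `d_{F,k}(a_n, a_u)`, this bounds that quantity `u`-almost everywhere.
-/

theorem Filter.eventually_forall_of_forall_eventually_apply {ι : Type*} {α : ι → Type*}
    [∀ i, Nonempty (α i)] {l : Filter ι} {R : ∀ i, α i → Prop}
    (h : ∀ p : ∀ i, α i, ∀ᶠ i in l, R i (p i)) : ∀ᶠ i in l, ∀ a, R i a := by
  have hwitness : ∀ i, ∃ a : α i, (∃ a, ¬R i a) → ¬R i a := fun i => by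
    by_cases hi : ∃ a, ¬R i a
    exacts [⟨hi.choose, fun _ => hi.choose_spec⟩, ⟨Classical.arbitrary _, fun h => (hi h).elim⟩]
  choose p hp using hwitness
  filter_upwards [h p] with i hi a
  by_contra ha
  exact hp i ⟨a, ha⟩ hi

theorem tendsto_nhds_zero_of_eventually_le {ι : Type*} {l : Filter ι} {f : ι → ℝ}
    (h0 : ∀ i, 0 ≤ f i) (h : ∀ ε > 0, ∀ᶠ i in l, f i ≤ ε) : Tendsto f l (𝓝 0) :=
  Metric.tendsto_nhds.2 fun ε hε => (h (ε / 2) (half_pos hε)).mono fun i hi => by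
    rw [Real.dist_0_eq_abs, abs_of_nonneg (h0 i)]
    linarith

theorem Set.inter_symmDiff_inter_subset {α : Type*} (A A' B B' : Set α) :
    (A ∩ A') ∆ (B ∩ B') ⊆ A ∆ B ∪ A' ∆ B' := by
  intro x
  simp only [Set.mem_symmDiff, Set.mem_inter_iff, Set.mem_union]
  tauto

theorem Set.symmDiff_subset_iUnion_symmDiff {ι α : Type*} {Q B D : ι → Set α}
    (hQd : Pairwise (Function.onFun Disjoint Q)) (hQ : ⋃ i, Q i = Set.univ)
    (hD : ⋃ i, D i = Set.univ)
    (hDB : ∀ i, D i ⊆ B i ∪ (⋃ j, B j)ᶜ) (i : ι) : Q i ∆ D i ⊆ ⋃ j, Q j ∆ B j := by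
  intro x hx
  simp only [Set.mem_iUnion, Set.mem_symmDiff]
  rcases hx with ⟨hxQ, hxD⟩ | ⟨hxD, hxQ⟩
  · obtain ⟨j, hxj⟩ := Set.mem_iUnion.1 (hD ▸ Set.mem_univ x)
    rcases hDB j hxj with hxB | hxB
    · have hji : j ≠ i := by rintro rfl; exact hxD hxj
      exact ⟨j, Or.inr ⟨hxB, fun hxQj => Set.disjoint_left.1 (hQd hji) hxQj hxQ⟩⟩
    · exact ⟨i, Or.inl ⟨hxQ, fun hxBi => hxB (Set.mem_iUnion.2 ⟨i, hxBi⟩)⟩⟩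
  · rcases hDB i hxD with hxB | hxB
    · exact ⟨i, Or.inr ⟨hxB, hxQ⟩⟩
    · obtain ⟨j, hxj⟩ := Set.mem_iUnion.1 (hQ ▸ Set.mem_univ x)
      exact ⟨j, Or.inl ⟨hxj, fun hxBj => hxB (Set.mem_iUnion.2 ⟨j, hxBj⟩)⟩⟩

theorem MeasureTheory.OuterMeasure.abs_toReal_sub_le_toReal_symmDiff {α : Type*}
    (m : OuterMeasure α) {s t : Set α} (hs : m s ≠ ∞) (ht : m t ≠ ∞) :
    |(m s).toReal - (m t).toReal| ≤ (m (s ∆ t)).toReal := by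
  have hst : m (s ∆ t) ≠ ∞ :=
    ne_top_of_le_ne_top (ENNReal.add_ne_top.2 ⟨hs, ht⟩)
      ((measure_mono Set.symmDiff_subset_union).trans (measure_union_le s t))
  have key : ∀ {s t : Set α}, m t ≠ ∞ → m (s ∆ t) ≠ ∞ →
      (m s).toReal ≤ (m t).toReal + (m (s ∆ t)).toReal := fun {s t} ht hst => by
    rw [← ENNReal.toReal_add ht hst, symmDiff_comm]
    exact ENNReal.toReal_mono (ENNReal.add_ne_top.2 ⟨ht, symmDiff_comm s t ▸ hst⟩)
      ((measure_mono (le_symmDiff_sup_left t s)).trans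
        ((measure_union_le _ _).trans_eq (add_comm _ _)))
  rw [abs_sub_le_iff]
  constructor
  · linarith [key ht hst]
  · have hts := key (s := t) (t := s) hs (by rwa [symmDiff_comm])
    rw [symmDiff_comm] at hts
    linarith

theorem neZero_of_iUnion_eq_univ {α : Type*} [Nonempty α] {k : ℕ} {S : Fin k → Set α}
    (h : ⋃ i, S i = Set.univ) : NeZero k :=
  ⟨by rintro rfl; exact Set.empty_ne_univ (by simpa using h)⟩

theorem exists_isPartition_subset_union_compl {α : Type*} [MeasurableSpace α] {k : ℕ} [NeZero k]
    {B : Fin k → Set α} (hB : ∀ i, MeasurableSet (B i)) :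
    ∃ D : Fin k → Set α, IsPartition D ∧ ∀ i, D i ⊆ B i ∪ (⋃ j, B j)ᶜ := by
  classical
  let B' i := B i ∪ if i = 0 then (⋃ j, B j)ᶜ else ∅
  have hB' : ∀ i, MeasurableSet (B' i) := fun i => (hB i).union (by
    split_ifs
    exacts [(MeasurableSet.iUnion hB).compl, .empty])
  refine ⟨disjointed B', ⟨fun i => disjointedRec (fun t j ht => ht.diff (hB' j)) (hB' i),
    disjoint_disjointed B', ?_⟩, fun i => (disjointed_subset B' i).trans ?_⟩
  · rw [iUnion_disjointed, Set.eq_univ_iff_forall]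
    intro x
    by_cases hx : x ∈ ⋃ j, B j
    · obtain ⟨j, hj⟩ := Set.mem_iUnion.1 hx
      exact Set.mem_iUnion.2 ⟨j, Or.inl hj⟩
    · exact Set.mem_iUnion.2 ⟨0, Or.inr (by simpa using hx)⟩
  · refine Set.union_subset_union_right _ ?_
    split_ifs
    exacts [subset_rfl, Set.empty_subset _]

section Ulim

variable {u : Ultrafilter ℕ}

theorem tendsto_ulim (f : ℕ → ℝ≥0∞) : Tendsto f u (𝓝 (ulim u f)) := by
  have h := (u.map f).le_nhds_lim
  rwa [Ultrafilter.coe_map] at h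

theorem ulim_eq {f : ℕ → ℝ≥0∞} {a : ℝ≥0∞} (h : Tendsto f u (𝓝 a)) : ulim u f = a :=
  tendsto_nhds_unique (tendsto_ulim f) h

theorem ulim_const (a : ℝ≥0∞) : ulim u (fun _ => a) = a :=
  ulim_eq tendsto_const_nhds

theorem ulim_mono {f g : ℕ → ℝ≥0∞} (h : ∀ᶠ n in u, f n ≤ g n) : ulim u f ≤ ulim u g :=
  le_of_tendsto_of_tendsto (tendsto_ulim f) (tendsto_ulim g) h

theorem ulim_add (f g : ℕ → ℝ≥0∞) : ulim u (fun n => f n + g n) = ulim u f + ulim u g :=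
  ulim_eq ((tendsto_ulim f).add (tendsto_ulim g))

theorem ulim_finset_sum {ι : Type*} (s : Finset ι) (f : ι → ℕ → ℝ≥0∞) :
    ulim u (fun n => ∑ i ∈ s, f i n) = ∑ i ∈ s, ulim u (f i) :=
  ulim_eq (tendsto_finsetSum s fun i _ => tendsto_ulim (f i))

end Ulim

section UltraproductSets

variable {u : Ultrafilter ℕ} {X : ℕ → Type*}

instance [∀ n, Nonempty (X n)] : Nonempty (UProd u X) :=
  ⟨uMk u fun _ => Classical.arbitrary _⟩

theorem uMk_surjective : Function.Surjective (uMk u : (∀ n, X n) → UProd u X) :=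
  Quot.mk_surjective

theorem uMk_eq_uMk_iff {x y : ∀ n, X n} : uMk u x = uMk u y ↔ ∀ᶠ n in u, x n = y n := by
  have h : Equivalence (uRel u (X := X)) :=
    ⟨fun _ => .of_forall fun _ => rfl, fun h => h.mono fun _ => Eq.symm,
      fun h h' => (h.and h').mono fun _ e => e.1.trans e.2⟩
  exact Quot.eq.trans h.eqvGen_iff

theorem mem_uSet_iff {A : ∀ n, Set (X n)} {x : ∀ n, X n} :
    uMk u x ∈ uSet u A ↔ ∀ᶠ n in u, x n ∈ A n := by
  refine ⟨fun ⟨y, hyx, hy⟩ => ?_, fun h => ⟨x, rfl, h⟩⟩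
  filter_upwards [hy, uMk_eq_uMk_iff.1 hyx] with n hn e
  rwa [← e]

theorem uSet_mono {A B : ∀ n, Set (X n)} (h : ∀ᶠ n in u, A n ⊆ B n) : uSet u A ⊆ uSet u B := by
  intro z
  obtain ⟨x, rfl⟩ := uMk_surjective z
  simp only [mem_uSet_iff]
  exact fun hA => (hA.and h).mono fun n hn => hn.2 hn.1

theorem uSet_univ : uSet u (fun n => (Set.univ : Set (X n))) = Set.univ := by
  ext z
  obtain ⟨x, rfl⟩ := uMk_surjective z
  simp [mem_uSet_iff]

theorem uSet_compl (A : ∀ n, Set (X n)) : uSet u (fun n => (A n)ᶜ) = (uSet u A)ᶜ := by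
  ext z
  obtain ⟨x, rfl⟩ := uMk_surjective z
  simp only [Set.mem_compl_iff, mem_uSet_iff, Ultrafilter.eventually_not]

theorem uSet_inter (A B : ∀ n, Set (X n)) :
    uSet u (fun n => A n ∩ B n) = uSet u A ∩ uSet u B := by
  ext z
  obtain ⟨x, rfl⟩ := uMk_surjective z
  simp only [Set.mem_inter_iff, mem_uSet_iff, eventually_and]

theorem uSet_union (A B : ∀ n, Set (X n)) :
    uSet u (fun n => A n ∪ B n) = uSet u A ∪ uSet u B := by
  ext z
  obtain ⟨x, rfl⟩ := uMk_surjective z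
  simp only [Set.mem_union, mem_uSet_iff, Ultrafilter.eventually_or]

theorem uSet_diff (A B : ∀ n, Set (X n)) :
    uSet u (fun n => A n \ B n) = uSet u A \ uSet u B :=
  (uSet_inter A fun n => (B n)ᶜ).trans (by rw [uSet_compl]; rfl)

theorem uSet_iUnion {ι : Type*} [Finite ι] (A : ι → ∀ n, Set (X n)) :
    uSet u (fun n => ⋃ i, A i n) = ⋃ i, uSet u (A i) := by
  ext z
  obtain ⟨x, rfl⟩ := uMk_surjective z
  simp only [Set.mem_iUnion, mem_uSet_iff, Ultrafilter.eventually_exists_iff]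

theorem uSet_biUnion {ι : Type*} (s : Finset ι) (A : ι → ∀ n, Set (X n)) :
    uSet u (fun n => ⋃ i ∈ s, A i n) = ⋃ i ∈ s, uSet u (A i) := by
  ext z
  obtain ⟨x, rfl⟩ := uMk_surjective z
  simpa [mem_uSet_iff] using
    Ultrafilter.eventually_exists_mem_iff (f := u) (P := fun i n => x n ∈ A i n) s.finite_toSet

theorem disjoint_uSet {A B : ∀ n, Set (X n)} (h : ∀ n, Disjoint (A n) (B n)) :
    Disjoint (uSet u A) (uSet u B) := by
  rw [Set.disjoint_iff_inter_eq_empty, ← uSet_inter, ← Set.compl_univ, ← uSet_univ, ← uSet_compl]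
  simp only [(h _).inter_eq, Set.compl_univ]

theorem uMap_uMk (g : ∀ n, X n → X n) (x : ∀ n, X n) :
    uMap u g (uMk u x) = uMk u fun n => g n (x n) :=
  rfl

theorem uMap_preimage_uSet (g : ∀ n, X n → X n) (A : ∀ n, Set (X n)) :
    uMap u g ⁻¹' uSet u A = uSet u fun n => g n ⁻¹' A n := by
  ext z
  obtain ⟨x, rfl⟩ := uMk_surjective z
  simp only [Set.mem_preimage, uMap_uMk, mem_uSet_iff]

end UltraproductSets

theorem exists_forall_eventually_mem_of_antitone {l : Filter ℕ} (hl : l ≤ cofinite)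
    {X : ℕ → Type*} [∀ n, Nonempty (X n)] {A : ℕ → ∀ n, Set (X n)} (hA : Antitone A)
    (hne : ∀ m, ∀ᶠ n in l, (A m n).Nonempty) : ∃ x : ∀ n, X n, ∀ m, ∀ᶠ n in l, x n ∈ A m n := by
  classical
  -- at stage `n`, pick a point of the deepest nonempty `A m n` with `m ≤ n`
  let depth n := Nat.findGreatest (fun m => (A m n).Nonempty) n
  refine ⟨fun n => if h : (A (depth n) n).Nonempty then h.some else Classical.arbitrary _,
    fun m => ?_⟩
  have hm : ∀ᶠ n in l, m ≤ n := (hl.trans Nat.cofinite_eq_atTop.le) (eventually_ge_atTop m)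
  filter_upwards [hne m, hm] with n hn hmn
  have hdepth : (A (depth n) n).Nonempty :=
    Nat.findGreatest_spec (P := fun m => (A m n).Nonempty) hmn hn
  rw [dif_pos hdepth]
  exact hA (Nat.le_findGreatest hmn hn) n hdepth.some_mem

section Saturation

variable {u : Ultrafilter ℕ} {X : ℕ → Type*} [∀ n, Nonempty (X n)]

/-- Countable saturation of the ultraproduct. -/
theorem exists_eventually_subset_biUnion_of_uSet_subset (hu : (u : Filter ℕ) ≤ cofinite)
    {B : ∀ n, Set (X n)} {C : ℕ → ∀ n, Set (X n)} (h : uSet u B ⊆ ⋃ i, uSet u (C i)) :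
    ∃ s : Finset ℕ, ∀ᶠ n in u, B n ⊆ ⋃ i ∈ s, C i n := by
  by_contra! hne
  let A m n := B n \ ⋃ i ∈ Finset.range m, C i n
  have hA : Antitone A := fun m m' hmm' n =>
    Set.sdiff_subset_sdiff_right (Set.biUnion_subset_biUnion_left (by simpa using hmm'))
  have hAne : ∀ m, ∀ᶠ n in u, (A m n).Nonempty := fun m =>
    (hne (Finset.range m)).mono fun n hn => Set.sdiff_nonempty.2 hn
  obtain ⟨x, hx⟩ := exists_forall_eventually_mem_of_antitone hu hA hAne
  obtain ⟨i, hi⟩ := Set.mem_iUnion.1 (h (mem_uSet_iff.2 ((hx 0).mono fun n hn => hn.1)))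
  obtain ⟨n, hCn, hAn⟩ := ((mem_uSet_iff.1 hi).and (hx (i + 1))).exists
  exact hAn.2 (Set.mem_biUnion (Finset.mem_range.2 i.lt_succ_self) hCn)

end Saturation

namespace IsPMP

variable {G : Type*} [Group G] {X : Type*} [MeasurableSpace X] {μ : Measure X}
  {a : G → X → X}

theorem inv_apply_apply (h : IsPMP μ a) (g : G) (x : X) : a g⁻¹ (a g x) = x := by
  rw [← h.2.2, inv_mul_cancel, h.2.1]

theorem apply_inv_apply (h : IsPMP μ a) (g : G) (x : X) : a g (a g⁻¹ x) = x := by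
  simpa using h.inv_apply_apply g⁻¹ x

theorem actSet_eq_preimage (h : IsPMP μ a) (g : G) (S : Set X) : actSet a g S = a g⁻¹ ⁻¹' S :=
  congrFun (Set.image_eq_preimage_of_inverse (h.inv_apply_apply g) (h.apply_inv_apply g)) S

theorem measurableSet_actSet (h : IsPMP μ a) (g : G) {S : Set X} (hS : MeasurableSet S) :
    MeasurableSet (actSet a g S) := by
  rw [h.actSet_eq_preimage]
  exact (h.1 g⁻¹).measurable hS

theorem measure_actSet (h : IsPMP μ a) (g : G) {S : Set X} (hS : MeasurableSet S) :
    μ (actSet a g S) = μ S := by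
  rw [h.actSet_eq_preimage]
  exact (h.1 g⁻¹).measure_preimage hS.nullMeasurableSet

end IsPMP

section UltraproductAction

variable {u : Ultrafilter ℕ} {G : Type*} [Group G] {X : ℕ → Type*} [∀ n, MeasurableSpace (X n)]
  {μ : ∀ n, Measure (X n)} {b : ∀ n, G → X n → X n}

theorem uAct_inv_uAct (hb : ∀ n, IsPMP (μ n) (b n)) (g : G) (z : UProd u X) :
    uAct u b g⁻¹ (uAct u b g z) = z := by
  obtain ⟨x, rfl⟩ := uMk_surjective z
  exact congrArg (uMk u) (funext fun n => (hb n).inv_apply_apply g (x n))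

theorem uAct_injective (hb : ∀ n, IsPMP (μ n) (b n)) (g : G) :
    Function.Injective (uAct u b g) :=
  Function.LeftInverse.injective (uAct_inv_uAct hb g)

theorem image_uAct_uSet (hb : ∀ n, IsPMP (μ n) (b n)) (g : G) (A : ∀ n, Set (X n)) :
    uAct u b g '' uSet u A = uSet u fun n => actSet (b n) g (A n) := by
  rw [Set.image_eq_preimage_of_inverse (uAct_inv_uAct hb g)
    fun z => by simpa using uAct_inv_uAct hb g⁻¹ z, uAct, uMap_preimage_uSet]
  simp only [(hb _).actSet_eq_preimage]

end UltraproductAction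

section LoebOuterMeasure

variable {u : Ultrafilter ℕ} {X : ℕ → Type*} [∀ n, MeasurableSpace (X n)]
  {μ : ∀ n, Measure (X n)}

theorem loebOuter_le_tsum {A : Set (UProd u X)} (B : ℕ → ∀ n, Set (X n))
    (hB : ∀ i n, MeasurableSet (B i n)) (hA : A ⊆ ⋃ i, uSet u (B i)) :
    loebOuter u μ A ≤ ∑' i, ulim u fun n => μ n (B i n) :=
  iInf₂_le B ⟨hB, hA⟩

theorem le_loebOuter {A : Set (UProd u X)} {t : ℝ≥0∞}
    (h : ∀ B : ℕ → ∀ n, Set (X n), (∀ i n, MeasurableSet (B i n)) →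
      A ⊆ ⋃ i, uSet u (B i) → t ≤ ∑' i, ulim u fun n => μ n (B i n)) :
    t ≤ loebOuter u μ A :=
  le_iInf₂ fun B hB => h B hB.1 hB.2

theorem exists_cover_tsum_lt {A : Set (UProd u X)} {t : ℝ≥0∞} (h : loebOuter u μ A < t) :
    ∃ B : ℕ → ∀ n, Set (X n), (∀ i n, MeasurableSet (B i n)) ∧ A ⊆ ⋃ i, uSet u (B i) ∧
      ∑' i, ulim u (fun n => μ n (B i n)) < t := by
  simpa only [loebOuter, iInf_lt_iff, exists_prop, and_assoc] using h

theorem loebOuter_iUnion_le (A : ℕ → Set (UProd u X)) :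
    loebOuter u μ (⋃ i, A i) ≤ ∑' i, loebOuter u μ (A i) := by
  refine ENNReal.le_of_forall_pos_le_add fun ε hε hA => ?_
  obtain ⟨ε', hε', hε'ε⟩ := ENNReal.exists_pos_sum_of_countable (ENNReal.coe_pos.2 hε).ne' ℕ
  have hcover : ∀ i, ∃ B : ℕ → ∀ n, Set (X n), (∀ j n, MeasurableSet (B j n)) ∧
      A i ⊆ ⋃ j, uSet u (B j) ∧ ∑' j, ulim u (fun n => μ n (B j n)) < loebOuter u μ (A i) + ε' i :=
    fun i => exists_cover_tsum_lt (ENNReal.lt_add_right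
      (ne_top_of_le_ne_top hA.ne (ENNReal.le_tsum i)) (by simpa using (hε' i).ne'))
  choose B hBm hAB hB using hcover
  calc loebOuter u μ (⋃ i, A i)
      ≤ ∑' k : ℕ, ulim u fun n => μ n (B k.unpair.1 k.unpair.2 n) := by
        refine loebOuter_le_tsum _ (fun k n => hBm _ _ n) (Set.iUnion_subset fun i => ?_)
        refine (hAB i).trans (Set.iUnion_subset fun j => ?_)
        exact Set.subset_iUnion_of_subset (Nat.pair i j) (by simp)
    _ = ∑' i, ∑' j, ulim u fun n => μ n (B i j n) := by
        rw [← ENNReal.tsum_prod, ← Nat.pairEquiv.symm.tsum_eq]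
        rfl
    _ ≤ ∑' i, (loebOuter u μ (A i) + ε' i) := ENNReal.tsum_le_tsum fun i => (hB i).le
    _ ≤ ∑' i, loebOuter u μ (A i) + ε := by
        rw [ENNReal.tsum_add]
        exact add_le_add_right hε'ε.le _

variable (u μ) in
noncomputable def loebOuterMeasure : OuterMeasure (UProd u X) where
  measureOf := loebOuter u μ
  empty := le_antisymm ((loebOuter_le_tsum (fun _ _ => ∅) (fun _ _ => .empty)
    (Set.empty_subset _)).trans_eq (by simp [ulim_const])) zero_le
  mono h := le_loebOuter fun B hB hA => loebOuter_le_tsum B hB (h.trans hA)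
  iUnion_nat A _ := loebOuter_iUnion_le A

local notation "θ" => loebOuterMeasure u μ

theorem loebOuterMeasure_apply (A : Set (UProd u X)) : θ A = loebOuter u μ A :=
  rfl

theorem loebOuterMeasure_uSet_le {B : ∀ n, Set (X n)} (hB : ∀ n, MeasurableSet (B n)) :
    θ (uSet u B) ≤ ulim u fun n => μ n (B n) := by
  classical
  refine (loebOuter_le_tsum (fun i => if i = 0 then B else fun _ => ∅)
    (fun i n => by split_ifs <;> simp [hB n]) (Set.subset_iUnion_of_subset 0 (by simp))).trans_eq ?_
  rw [tsum_eq_single 0 fun i hi => by simp [hi, ulim_const]]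
  simp

theorem loebOuterMeasure_le_one [∀ n, IsProbabilityMeasure (μ n)] (A : Set (UProd u X)) :
    θ A ≤ 1 :=
  calc θ A ≤ θ (uSet u fun n => Set.univ) := measure_mono (by simp [uSet_univ])
    _ ≤ 1 := (loebOuterMeasure_uSet_le fun _ => .univ).trans_eq (by simp [ulim_const])

theorem loebOuterMeasure_ne_top [∀ n, IsProbabilityMeasure (μ n)] (A : Set (UProd u X)) :
    θ A ≠ ∞ :=
  ne_top_of_le_ne_top ENNReal.one_ne_top (loebOuterMeasure_le_one A)

theorem loebOuterMeasure_uSet (hu : (u : Filter ℕ) ≤ cofinite) [∀ n, Nonempty (X n)]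
    {B : ∀ n, Set (X n)} (hB : ∀ n, MeasurableSet (B n)) :
    θ (uSet u B) = ulim u fun n => μ n (B n) := by
  refine le_antisymm (loebOuterMeasure_uSet_le hB) (le_loebOuter fun C _ hBC => ?_)
  obtain ⟨s, hs⟩ := exists_eventually_subset_biUnion_of_uSet_subset hu hBC
  calc ulim u (fun n => μ n (B n)) ≤ ulim u fun n => ∑ i ∈ s, μ n (C i n) :=
        ulim_mono (hs.mono fun n hn => (measure_mono hn).trans (measure_biUnion_finset_le _ _))
    _ = ∑ i ∈ s, ulim u fun n => μ n (C i n) := ulim_finset_sum _ _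
    _ ≤ ∑' i, ulim u fun n => μ n (C i n) := ENNReal.sum_le_tsum _

theorem loebOuterMeasure_image_uAct_le {G : Type*} [Group G] {b : ∀ n, G → X n → X n}
    (hb : ∀ n, IsPMP (μ n) (b n)) (g : G) (Z : Set (UProd u X)) :
    θ (uAct u b g '' Z) ≤ θ Z := by
  refine le_loebOuter fun B hB hZB => ?_
  calc θ (uAct u b g '' Z) ≤ ∑' i, ulim u fun n => μ n (actSet (b n) g (B i n)) := by
        refine loebOuter_le_tsum _ (fun i n => (hb n).measurableSet_actSet g (hB i n)) ?_
        simpa only [Set.image_iUnion, image_uAct_uSet hb] using Set.image_mono (f := uAct u b g) hZB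
    _ = ∑' i, ulim u fun n => μ n (B i n) :=
        tsum_congr fun i => congrArg (ulim u) (funext fun n => (hb n).measure_actSet g (hB i n))

theorem loebMeasurable_uSet {A : ∀ n, Set (X n)} (hA : ∀ n, MeasurableSet (A n)) :
    LoebMeasurable u μ (uSet u A) := by
  intro S
  refine ENNReal.le_of_forall_pos_le_add fun δ hδ hS => ?_
  obtain ⟨B, hBm, hSB, hB⟩ :=
    exists_cover_tsum_lt (ENNReal.lt_add_right hS.ne (ENNReal.coe_ne_zero.2 hδ.ne'))
  calc θ (S ∩ uSet u A) + θ (S \ uSet u A)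
      ≤ (∑' i, ulim u fun n => μ n (B i n ∩ A n)) + ∑' i, ulim u fun n => μ n (B i n \ A n) := by
        gcongr
        · refine loebOuter_le_tsum _ (fun i n => (hBm i n).inter (hA n)) ?_
          simpa only [uSet_inter, Set.iUnion_inter] using Set.inter_subset_inter_left _ hSB
        · refine loebOuter_le_tsum _ (fun i n => (hBm i n).diff (hA n)) ?_
          simpa only [uSet_diff, Set.iUnion_sdiff] using Set.sdiff_subset_sdiff_left hSB
    _ = ∑' i, ulim u fun n => μ n (B i n) := by
        rw [← ENNReal.tsum_add]
        simp only [← ulim_add, measure_inter_add_sdiff _ (hA _)]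
    _ ≤ θ S + δ := hB.le

theorem exists_uSet_symmDiff_le {Q : Set (UProd u X)} (hQ : LoebMeasurable u μ Q)
    (hQfin : θ Q ≠ ∞) {δ : ℝ≥0∞} (hδ : 0 < δ) :
    ∃ B : ∀ n, Set (X n), (∀ n, MeasurableSet (B n)) ∧ θ (Q ∆ uSet u B) ≤ δ := by
  rcases eq_or_ne δ ∞ with rfl | hδtop
  · exact ⟨fun _ => ∅, fun _ => .empty, le_top⟩
  have hδ2 : 0 < δ / 2 := ENNReal.half_pos hδ.ne'
  obtain ⟨C, hCm, hQC, hC⟩ := exists_cover_tsum_lt (ENNReal.lt_add_right hQfin hδ2.ne')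
  have hCfin : ∑' i, ulim u (fun n => μ n (C i n)) ≠ ∞ := ne_top_of_lt hC
  obtain ⟨m, hm⟩ : ∃ m, ∑' i, ulim u (fun n => μ n (C (i + m) n)) < δ / 2 :=
    ((ENNReal.tendsto_sum_nat_add _ hCfin).eventually (gt_mem_nhds hδ2)).exists
  let B n := ⋃ i ∈ Finset.range m, C i n
  let W := ⋃ i, uSet u (C i)
  refine ⟨B, fun n => Finset.measurableSet_biUnion _ fun i _ => hCm i n, ?_⟩
  have hout : θ (Q \ uSet u B) ≤ δ / 2 := by
    refine (loebOuter_le_tsum (fun i => C (i + m)) (fun i => hCm _) ?_).trans hm.le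
    rintro z ⟨hzQ, hzB⟩
    obtain ⟨i, hi⟩ := Set.mem_iUnion.1 (hQC hzQ)
    rcases lt_or_ge i m with him | him
    · exact (hzB (uSet_mono (.of_forall fun n =>
        Set.subset_biUnion_of_mem (u := fun i => C i n) (Finset.mem_range.2 him)) hi)).elim
    · exact Set.mem_iUnion.2 ⟨i - m, by rwa [Nat.sub_add_cancel him]⟩
  -- `Q` splits the cover `W` additively, so `W \ Q` is small
  have hWQ : θ (W \ Q) < δ / 2 := by
    refine (ENNReal.add_lt_add_iff_left hQfin).1 (lt_of_le_of_lt ?_ hC)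
    calc θ Q + θ (W \ Q) = θ (W ∩ Q) + θ (W \ Q) := by rw [Set.inter_eq_right.2 hQC]
      _ ≤ θ W := hQ W
      _ ≤ _ := loebOuter_le_tsum C hCm subset_rfl
  have hin : θ (uSet u B \ Q) ≤ δ / 2 := by
    refine (measure_mono (Set.sdiff_subset_sdiff_left ?_)).trans hWQ.le
    rw [uSet_biUnion]
    exact Set.iUnion₂_subset_iUnion _ _
  calc θ (Q ∆ uSet u B) ≤ θ (Q \ uSet u B) + θ (uSet u B \ Q) := measure_union_le _ _
    _ ≤ δ := (add_le_add hout hin).trans_eq (ENNReal.add_halves δ)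

end LoebOuterMeasure

section LoebPartitions

variable {u : Ultrafilter ℕ} {X : ℕ → Type*} [∀ n, MeasurableSpace (X n)]
  {μ : ∀ n, Measure (X n)}

local notation "θ" => loebOuterMeasure u μ

theorem loebPartition_uSet {k : ℕ} {P : ∀ n, Fin k → Set (X n)} (hP : ∀ n, IsPartition (P n)) :
    LoebPartition u μ fun i => uSet u fun n => P n i := by
  refine ⟨fun i => loebMeasurable_uSet fun n => (hP n).1 i,
    fun i j hij => disjoint_uSet fun n => (hP n).2.1 hij, ?_⟩
  rw [← uSet_iUnion]
  simp only [(hP _).2.2, uSet_univ]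

theorem exists_isPartition_symmDiff_le [∀ n, IsProbabilityMeasure (μ n)] {k : ℕ}
    {Q : Fin k → Set (UProd u X)} (hQ : LoebPartition u μ Q) {η : ℝ≥0∞} (hη : 0 < η) :
    ∃ P : ∀ n, Fin k → Set (X n), (∀ n, IsPartition (P n)) ∧
      ∀ i, θ (Q i ∆ uSet u fun n => P n i) ≤ η := by
  have := fun n => nonempty_of_isProbabilityMeasure (μ n)
  have := neZero_of_iUnion_eq_univ hQ.2.2
  choose B hBm hB using fun i => exists_uSet_symmDiff_le (hQ.1 i) (loebOuterMeasure_ne_top _)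
    (ENNReal.div_pos hη.ne' (ENNReal.natCast_ne_top k))
  choose P hP hPB using fun n => exists_isPartition_subset_union_compl fun i => hBm i n
  refine ⟨P, hP, fun i => ?_⟩
  have hcover : ⋃ i, uSet u (fun n => P n i) = Set.univ := by
    rw [← uSet_iUnion]
    simp only [(hP _).2.2, uSet_univ]
  have hsub : ∀ i, uSet u (fun n => P n i) ⊆ uSet u (B i) ∪ (⋃ j, uSet u (B j))ᶜ := fun i => by
    rw [← uSet_iUnion, ← uSet_compl, ← uSet_union]
    exact uSet_mono (.of_forall fun n => hPB n i)
  calc θ (Q i ∆ uSet u fun n => P n i) ≤ θ (⋃ j, Q j ∆ uSet u (B j)) :=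
        measure_mono (Set.symmDiff_subset_iUnion_symmDiff hQ.2.1 hQ.2.2 hcover hsub i)
    _ ≤ ∑ j, θ (Q j ∆ uSet u (B j)) := measure_iUnion_fintype_le _ _
    _ ≤ ∑ _j : Fin k, η / k := Finset.sum_le_sum fun j _ => hB j
    _ = η := by
        simp only [Finset.sum_const, Finset.card_univ, Fintype.card_fin, nsmul_eq_mul]
        exact ENNReal.mul_div_cancel (by simpa using NeZero.ne k) (ENNReal.natCast_ne_top k)

end LoebPartitions

section Statistics

variable {u : Ultrafilter ℕ} {G : Type*} {X : ℕ → Type*} [∀ n, MeasurableSpace (X n)]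
  {μ : ∀ n, Measure (X n)} {Y : Type*} [MeasurableSpace Y] {ν : Measure Y} {c : G → Y → Y}
  {T : G → UProd u X → UProd u X} {F : Finset G} {k : ℕ}

local notation "θ" => loebOuterMeasure u μ

theorem statDistL_nonneg (P : Fin k → Set Y) (Q : Fin k → Set (UProd u X)) :
    0 ≤ statDistL u ν c μ T F P Q :=
  Finset.sum_nonneg fun _ _ => Finset.sum_nonneg fun _ _ => Finset.sum_nonneg fun _ _ =>
    abs_nonneg _

theorem statDistL_le_add (P : Fin k → Set Y) (Q Q' : Fin k → Set (UProd u X)) :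
    statDistL u ν c μ T F P Q ≤ statDistL u ν c μ T F P Q' +
      ∑ i, ∑ j, ∑ g ∈ F, |(loebOuter u μ (Q' i ∩ T g '' Q' j)).toReal -
        (loebOuter u μ (Q i ∩ T g '' Q j)).toReal| := by
  simp only [statDistL, ← Finset.sum_add_distrib]
  gcongr
  exact abs_sub_le _ _ _

theorem dPartFromLoeb_le {Q : Fin k → Set (UProd u X)} {P : Fin k → Set Y} (hP : IsPartition P) :
    dPartFromLoeb u μ T F Q ν c ≤ statDistL u ν c μ T F P Q :=
  csInf_le ⟨0, by rintro _ ⟨P, -, rfl⟩; exact statDistL_nonneg P Q⟩ ⟨P, hP, rfl⟩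

theorem dPartToLoeb_le {P : Fin k → Set Y} {Q : Fin k → Set (UProd u X)}
    (hQ : LoebPartition u μ Q) : dPartToLoeb u ν c μ T F P ≤ statDistL u ν c μ T F P Q :=
  csInf_le ⟨0, by rintro _ ⟨Q, -, rfl⟩; exact statDistL_nonneg P Q⟩ ⟨Q, hQ, rfl⟩

theorem dPartFromLoeb_nonneg (Q : Fin k → Set (UProd u X)) : 0 ≤ dPartFromLoeb u μ T F Q ν c :=
  Real.sInf_nonneg (by rintro _ ⟨P, -, rfl⟩; exact statDistL_nonneg P Q)

theorem dPartToLoeb_nonneg (P : Fin k → Set Y) : 0 ≤ dPartToLoeb u ν c μ T F P :=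
  Real.sInf_nonneg (by rintro _ ⟨Q, -, rfl⟩; exact statDistL_nonneg P Q)

theorem dNumToLoeb_nonneg : 0 ≤ dNumToLoeb u ν c μ T F k :=
  Real.sSup_nonneg (by rintro _ ⟨P, -, rfl⟩; exact dPartToLoeb_nonneg P)

variable [Group G] [∀ n, IsProbabilityMeasure (μ n)] {b : ∀ n, G → X n → X n}

theorem abs_loebOuter_inter_image_sub_le (hb : ∀ n, IsPMP (μ n) (b n)) (g : G)
    (A A' B B' : Set (UProd u X)) :
    |(loebOuter u μ (A ∩ uAct u b g '' A')).toReal - (loebOuter u μ (B ∩ uAct u b g '' B')).toReal|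
      ≤ (θ (A ∆ B)).toReal + (θ (A' ∆ B')).toReal := by
  have hsub :
      (A ∩ uAct u b g '' A') ∆ (B ∩ uAct u b g '' B') ⊆ A ∆ B ∪ uAct u b g '' (A' ∆ B') := by
    rw [Set.image_symmDiff (uAct_injective hb g)]
    exact Set.inter_symmDiff_inter_subset _ _ _ _
  refine (OuterMeasure.abs_toReal_sub_le_toReal_symmDiff θ (loebOuterMeasure_ne_top _)
    (loebOuterMeasure_ne_top _)).trans ?_
  rw [← ENNReal.toReal_add (loebOuterMeasure_ne_top _) (loebOuterMeasure_ne_top _)]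
  refine ENNReal.toReal_mono
    (ENNReal.add_ne_top.2 ⟨loebOuterMeasure_ne_top _, loebOuterMeasure_ne_top _⟩) ?_
  calc θ ((A ∩ uAct u b g '' A') ∆ (B ∩ uAct u b g '' B'))
      ≤ θ (A ∆ B) + θ (uAct u b g '' (A' ∆ B')) := (measure_mono hsub).trans (measure_union_le _ _)
    _ ≤ θ (A ∆ B) + θ (A' ∆ B') := add_le_add le_rfl (loebOuterMeasure_image_uAct_le hb g _)

theorem tendsto_statDistL_uSet (hu : (u : Filter ℕ) ≤ cofinite) (hb : ∀ n, IsPMP (μ n) (b n))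
    (F : Finset G) {P : ∀ n, Fin k → Set (X n)} (hP : ∀ n, IsPartition (P n)) :
    Tendsto (fun n => statDistL u (μ n) (b n) μ (uAct u b) F (P n) fun i => uSet u fun n => P n i)
      u (𝓝 0) := by
  have := fun n => nonempty_of_isProbabilityMeasure (μ n)
  have hstat : ∀ i j g, Tendsto (fun n => |(μ n (P n i ∩ actSet (b n) g (P n j))).toReal -
      (loebOuter u μ ((uSet u fun n => P n i) ∩ uAct u b g '' uSet u fun n => P n j)).toReal|)
      u (𝓝 0) := by
    intro i j g
    have h := loebOuterMeasure_uSet (μ := μ) hu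
      fun n => ((hP n).1 i).inter ((hb n).measurableSet_actSet g ((hP n).1 j))
    rw [uSet_inter, ← image_uAct_uSet hb] at h
    rw [← loebOuterMeasure_apply, h]
    simpa using (tendsto_sub_nhds_zero_iff.2 ((ENNReal.tendsto_toReal
      (h ▸ loebOuterMeasure_ne_top _)).comp (tendsto_ulim _))).abs
  unfold statDistL
  simpa only [Finset.sum_const_zero] using tendsto_finsetSum Finset.univ fun i _ =>
    tendsto_finsetSum Finset.univ fun j _ => tendsto_finsetSum F fun g _ => hstat i j g

theorem eventually_exists_isPartition_statDistL_le (hu : (u : Filter ℕ) ≤ cofinite)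
    (hb : ∀ n, IsPMP (μ n) (b n)) (F : Finset G) {Q : Fin k → Set (UProd u X)}
    (hQ : LoebPartition u μ Q) {ε : ℝ} (hε : 0 < ε) :
    ∀ᶠ n in u, ∃ P : Fin k → Set (X n), IsPartition P ∧
      statDistL u (μ n) (b n) μ (uAct u b) F P Q ≤ ε := by
  set N : ℝ := k * k * F.card
  set η : ℝ := ε / (4 * (N + 1))
  have hη : 0 < η := by positivity
  obtain ⟨P, hP, hPQ⟩ := exists_isPartition_symmDiff_le hQ (ENNReal.ofReal_pos.2 hη)
  have hd : ∀ i, (θ ((uSet u fun n => P n i) ∆ Q i)).toReal ≤ η := fun i =>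
    ENNReal.toReal_le_of_le_ofReal hη.le (symmDiff_comm (Q i) _ ▸ hPQ i)
  have herr : ∑ i, ∑ j, ∑ g ∈ F,
      |(loebOuter u μ ((uSet u fun n => P n i) ∩ uAct u b g '' uSet u fun n => P n j)).toReal -
        (loebOuter u μ (Q i ∩ uAct u b g '' Q j)).toReal| ≤ ε / 2 :=
    calc _ ≤ ∑ _i : Fin k, ∑ _j : Fin k, ∑ _g ∈ F, (η + η) := by
          gcongr with i _ j _ g _
          exact (abs_loebOuter_inter_image_sub_le hb g _ _ _ _).trans (add_le_add (hd i) (hd j))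
      _ = N * (2 * η) := by
          simp only [Finset.sum_const, Finset.card_univ, Fintype.card_fin, nsmul_eq_mul, N]
          ring
      _ ≤ ε / 2 := by
          have : N * (2 * η) = ε / 2 * (N / (N + 1)) := by simp only [η]; field_simp; ring
          rw [this]
          exact mul_le_of_le_one_right (by positivity)
            ((div_le_one (by positivity)).2 (by linarith))
  filter_upwards [(tendsto_order.1 (tendsto_statDistL_uSet hu hb F hP)).2 (ε / 2) (half_pos hε)]
    with n hn
  exact ⟨P n, hP n, (statDistL_le_add _ _ _).trans (by linarith)⟩

theorem tendsto_dPartFromLoeb (hu : (u : Filter ℕ) ≤ cofinite) (hb : ∀ n, IsPMP (μ n) (b n))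
    (F : Finset G) {Q : Fin k → Set (UProd u X)} (hQ : LoebPartition u μ Q) :
    Tendsto (fun n => dPartFromLoeb u μ (uAct u b) F Q (μ n) (b n)) u (𝓝 0) :=
  tendsto_nhds_zero_of_eventually_le (fun _ => dPartFromLoeb_nonneg Q) fun _ hε =>
    (eventually_exists_isPartition_statDistL_le hu hb F hQ hε).mono fun _ ⟨_, hP, hPQ⟩ =>
      (dPartFromLoeb_le hP).trans hPQ

theorem tendsto_dNumToLoeb (hu : (u : Filter ℕ) ≤ cofinite) (hb : ∀ n, IsPMP (μ n) (b n))
    (F : Finset G) (k : ℕ) :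
    Tendsto (fun n => dNumToLoeb u (μ n) (b n) μ (uAct u b) F k) u (𝓝 0) := by
  have := fun n => nonempty_of_isProbabilityMeasure (μ n)
  refine tendsto_nhds_zero_of_eventually_le (fun _ => dNumToLoeb_nonneg) fun ε hε => ?_
  suffices ∀ᶠ n in u, ∀ P : Fin k → Set (X n), IsPartition P →
      dPartToLoeb u (μ n) (b n) μ (uAct u b) F P ≤ ε from
    this.mono fun n hn => Real.sSup_le (by rintro _ ⟨P, hP, rfl⟩; exact hn P hP) hε.le
  rcases eq_zero_or_neZero k with rfl | hk
  · exact .of_forall fun n P hP => ((neZero_of_iUnion_eq_univ hP.2.2).out rfl).elim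
  -- it suffices to control every sequence of partitions, through its internal partition
  have : ∀ n, Nonempty {P : Fin k → Set (X n) // IsPartition P} := fun n =>
    let ⟨P, hP, _⟩ := exists_isPartition_subset_union_compl (B := fun _ => (∅ : Set (X n)))
      fun _ => .empty
    ⟨⟨P, hP⟩⟩
  have hseq : ∀ P : ∀ n, {P : Fin k → Set (X n) // IsPartition P},
      ∀ᶠ n in u, dPartToLoeb u (μ n) (b n) μ (uAct u b) F (P n).1 ≤ ε := fun P =>
    ((tendsto_order.1 (tendsto_statDistL_uSet hu hb F fun n => (P n).2)).2 ε hε).mono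
      fun n hn => (dPartToLoeb_le (loebPartition_uSet fun n => (P n).2)).trans hn.le
  filter_upwards [Filter.eventually_forall_of_forall_eventually_apply
    (R := fun n (P : {P : Fin k → Set (X n) // IsPartition P}) =>
      dPartToLoeb u (μ n) (b n) μ (uAct u b) F P.1 ≤ ε) hseq] with n hn P hP
  exact hn ⟨P, hP⟩

end Statistics

theorem ultraproduct_is_wc_limit_general {G : Type*} [Group G]
    (u : Ultrafilter ℕ) (hu : (u : Filter ℕ) ≤ Filter.cofinite)
    {X : ℕ → Type*} [∀ n, MeasurableSpace (X n)]
    (μ : ∀ n, Measure (X n)) [∀ n, IsProbabilityMeasure (μ n)]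
    (b : ∀ n, G → X n → X n) (hb : ∀ n, IsPMP (μ n) (b n)) :
    ∀ F : Finset G,
      (∀ (k : ℕ) (Q : Fin k → Set (UProd u X)), LoebPartition u μ Q →
        Tendsto (fun n => dPartFromLoeb u μ (uAct u b) F Q (μ n) (b n))
          (u : Filter ℕ) (nhds 0)) ∧
      (∀ k : ℕ,
        Tendsto (fun n => dNumToLoeb u (μ n) (b n) μ (uAct u b) F k)
          (u : Filter ℕ) (nhds 0)) :=
  fun F => ⟨fun _ _ hQ => tendsto_dPartFromLoeb hu hb F hQ, tendsto_dNumToLoeb hu hb F⟩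

/-- The ultraproduct action `a_u` of a sequence of pmp actions `a_n`
is the WC-limit of the sequence along `u`: for every finite `F ⊆ G`, (i) for every
finite Loeb partition `Q`, `lim_u d_{F,Q}(a_u, a_n) = 0`, and (ii) for every `k`,
`lim_u d_{F,k}(a_n, a_u) = 0`. -/
theorem ultraproduct_is_wc_limit {G : Type*} [Group G] [Countable G]
    (u : Ultrafilter ℕ) (hu : (u : Filter ℕ) ≤ Filter.cofinite)
    {X : ℕ → Type*} [∀ n, MeasurableSpace (X n)]
    (μ : ∀ n, Measure (X n)) [∀ n, IsProbabilityMeasure (μ n)]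
    (b : ∀ n, G → X n → X n) (hb : ∀ n, IsPMP (μ n) (b n)) :
    ∀ F : Finset G,
      (∀ (k : ℕ) (Q : Fin k → Set (UProd u X)), LoebPartition u μ Q →
        Tendsto (fun n => dPartFromLoeb u μ (uAct u b) F Q (μ n) (b n))
          (u : Filter ℕ) (nhds 0)) ∧
      (∀ k : ℕ,
        Tendsto (fun n => dNumToLoeb u (μ n) (b n) μ (uAct u b) F k)
          (u : Filter ℕ) (nhds 0)) :=
  ultraproduct_is_wc_limit_general u hu μ b hb
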